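/- arXiv:1912.01801 — 7 statements merged into one kernel-verified Lean document; each statement's English description precedes it below -/
import Mathlib

section
/- For all q ∈ (ℤ/2ℤ)⁴ and τ ∈ T, one has q + τ·q ∈ S if and only if τ ∈ L or q ∈ Q. -/
open Equiv

namespace CantorPaper

/-- `(ℤ/2ℤ)⁴`, written multiplicatively, as functions `{1,2,3,4} → ℤ/2ℤ`. -/
abbrev V : Type := Fin 4 → Multiplicative (ZMod 2)

/-- The action of the symmetric group on `(ℤ/2ℤ)⁴` by permuting coordinates:
`(τ · q) i = q (τ⁻¹ i)`. -/
def act : Perm (Fin 4) →* MulAut V where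
  toFun τ :=
    { toFun := fun q i => q (τ⁻¹ i)
      invFun := fun q i => q (τ i)
      left_inv := fun q => funext fun i => by simp
      right_inv := fun q => funext fun i => by simp
      map_mul' := fun q r => rfl }
  map_one' := by
    ext q i
    simp
  map_mul' := fun σ τ => by
    ext q i
    simp [Perm.mul_apply]

@[simp] lemma act_apply (τ : Perm (Fin 4)) (q : V) (i : Fin 4) :
    act τ q i = q (τ⁻¹ i) := rfl

/-- `T = ⟨(1 4), (1 2)(3 4)⟩`, the subgroup of the symmetric group on
`{1,2,3,4}` preserving the partition `{{1,4},{2,3}}` (0-indexed). -/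
def T : Subgroup (Perm (Fin 4)) :=
  Subgroup.closure {swap 0 3, swap 0 1 * swap 2 3}

/-- `L = {id, (1 4), (2 3), (1 4)(2 3)}`, the subgroup fixing each block of
the partition `{{1,4},{2,3}}` (0-indexed). -/
def L : Subgroup (Perm (Fin 4)) where
  carrier := {τ | τ = 1 ∨ τ = swap 0 3 ∨ τ = swap 1 2 ∨ τ = swap 0 3 * swap 1 2}
  one_mem' := by left; rfl
  mul_mem' := by
    intro a b ha hb
    simp only [Set.mem_setOf_eq] at ha hb ⊢
    revert ha hb
    revert a b
    decide
  inv_mem' := by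
    intro a ha
    simp only [Set.mem_setOf_eq] at ha ⊢
    revert ha
    revert a
    decide

lemma mem_L_iff (τ : Perm (Fin 4)) :
    τ ∈ L ↔ (τ = 1 ∨ τ = swap 0 3 ∨ τ = swap 1 2 ∨ τ = swap 0 3 * swap 1 2) :=
  Iff.rfl

/-- `Q = {q ∈ (ℤ/2ℤ)⁴ : q 1 + q 2 + q 3 + q 4 = 0}` (multiplicatively,
the product of the coordinates is `1`). -/
def Q : Subgroup V where
  carrier := {q | q 0 * q 1 * q 2 * q 3 = 1}
  one_mem' := by simp
  mul_mem' := by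
    intro a b ha hb
    simp only [Set.mem_setOf_eq] at ha hb ⊢
    revert ha hb
    revert a b
    decide
  inv_mem' := by
    intro a ha
    simp only [Set.mem_setOf_eq] at ha ⊢
    revert ha
    revert a
    decide

lemma mem_Q_iff (q : V) : q ∈ Q ↔ q 0 * q 1 * q 2 * q 3 = 1 := Iff.rfl

/-- `S = {q ∈ (ℤ/2ℤ)⁴ : q 1 = q 4, q 2 = q 3}`. -/
def S : Subgroup V where
  carrier := {q | q 0 = q 3 ∧ q 1 = q 2}
  one_mem' := by exact ⟨rfl, rfl⟩
  mul_mem' := by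
    intro a b ha hb
    simp only [Set.mem_setOf_eq] at ha hb ⊢
    revert ha hb
    revert a b
    decide
  inv_mem' := by
    intro a ha
    simp only [Set.mem_setOf_eq] at ha ⊢
    revert ha
    revert a
    decide

lemma mem_S_iff (q : V) : q ∈ S ↔ (q 0 = q 3 ∧ q 1 = q 2) := Iff.rfl

/-- The action of `T` on `(ℤ/2ℤ)⁴`. -/
def φ : T →* MulAut V := act.comp T.subtype

/-- The semidirect product `(ℤ/2ℤ)⁴ ⋊ T`. -/
abbrev G : Type := V ⋊[φ] T

lemma Q_invariant (τ : Perm (Fin 4)) {q : V} (hq : q ∈ Q) : act τ q ∈ Q := by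
  simp only [mem_Q_iff, act_apply] at hq ⊢
  revert hq
  revert q
  revert τ
  decide

lemma S_invariant_L {τ : Perm (Fin 4)} (hτ : τ ∈ L) {q : V} (hq : q ∈ S) :
    act τ q ∈ S := by
  simp only [mem_L_iff] at hτ
  simp only [mem_S_iff, act_apply] at hq ⊢
  revert hq
  revert q
  revert hτ
  revert τ
  decide

lemma S_invariant_T {τ : Perm (Fin 4)} (hτ : τ ∈ T) :
    ∀ q : V, act τ q ∈ S ↔ q ∈ S := by
  induction hτ using Subgroup.closure_induction with
  | mem x hx =>
      simp only [Set.mem_insert_iff, Set.mem_singleton_iff] at hx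
      rcases hx with rfl | rfl <;>
        · intro q
          simp only [mem_S_iff, act_apply]
          revert q
          decide
  | one => intro q; simp [mem_S_iff]
  | mul x y hx hy ihx ihy =>
      intro q
      rw [map_mul]
      rw [show (act x * act y) q = act x (act y q) from rfl]
      exact (ihx _).trans (ihy q)
  | inv x hx ih =>
      intro q
      have key : ∀ r : V, act x (act x⁻¹ r) = r := by
        intro r
        rw [← MulAut.mul_apply, ← map_mul, mul_inv_cancel, map_one]
        rfl
      constructor
      · intro h
        have := (ih (act x⁻¹ q)).mpr h
        rwa [key] at this
      · intro h
        exact (ih (act x⁻¹ q)).mp (by rwa [key])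

/-- The subgroup `Q ⋊ T` of `(ℤ/2ℤ)⁴ ⋊ T`. -/
def QT : Subgroup G where
  carrier := {g | g.left ∈ Q}
  one_mem' := by
    simp only [Set.mem_setOf_eq, SemidirectProduct.one_left]
    exact Q.one_mem
  mul_mem' := by
    intro a b ha hb
    simp only [Set.mem_setOf_eq, SemidirectProduct.mul_left] at ha hb ⊢
    exact Q.mul_mem ha (Q_invariant _ hb)
  inv_mem' := by
    intro a ha
    simp only [Set.mem_setOf_eq, SemidirectProduct.inv_left] at ha ⊢
    exact Q_invariant _ (Q.inv_mem ha)

lemma mem_QT_iff (g : G) : g ∈ QT ↔ g.left ∈ Q := Iff.rfl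

/-- The subgroup `Q ⋊ L` of `(ℤ/2ℤ)⁴ ⋊ T`. -/
def QL : Subgroup G where
  carrier := {g | g.left ∈ Q ∧ (g.right : Perm (Fin 4)) ∈ L}
  one_mem' := by
    refine ⟨?_, ?_⟩
    · simpa using Q.one_mem
    · simpa using L.one_mem
  mul_mem' := by
    intro a b ha hb
    refine ⟨?_, ?_⟩
    · simp only [SemidirectProduct.mul_left]
      exact Q.mul_mem ha.1 (Q_invariant _ hb.1)
    · simp only [SemidirectProduct.mul_right, Subgroup.coe_mul]
      exact L.mul_mem ha.2 hb.2
  inv_mem' := by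
    intro a ha
    refine ⟨?_, ?_⟩
    · simp only [SemidirectProduct.inv_left]
      exact Q_invariant _ (Q.inv_mem ha.1)
    · simp only [SemidirectProduct.inv_right, InvMemClass.coe_inv]
      exact L.inv_mem ha.2

lemma mem_QL_iff (g : G) :
    g ∈ QL ↔ (g.left ∈ Q ∧ (g.right : Perm (Fin 4)) ∈ L) := Iff.rfl

/-- The subgroup `S ⋊ T` of `(ℤ/2ℤ)⁴ ⋊ T`. -/
def ST : Subgroup G where
  carrier := {g | g.left ∈ S}
  one_mem' := by
    simp only [Set.mem_setOf_eq, SemidirectProduct.one_left]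
    exact S.one_mem
  mul_mem' := by
    intro a b ha hb
    simp only [Set.mem_setOf_eq, SemidirectProduct.mul_left] at ha hb ⊢
    refine S.mul_mem ha ?_
    exact (S_invariant_T (a.right).2 _).mpr hb
  inv_mem' := by
    intro a ha
    simp only [Set.mem_setOf_eq, SemidirectProduct.inv_left] at ha ⊢
    exact (S_invariant_T (a.right⁻¹).2 _).mpr (S.inv_mem ha)

lemma mem_ST_iff (g : G) : g ∈ ST ↔ g.left ∈ S := Iff.rfl

/-- The subgroup `S ⋊ L` of `(ℤ/2ℤ)⁴ ⋊ T`. -/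
def SL : Subgroup G where
  carrier := {g | g.left ∈ S ∧ (g.right : Perm (Fin 4)) ∈ L}
  one_mem' := by
    refine ⟨?_, ?_⟩
    · simpa using S.one_mem
    · simpa using L.one_mem
  mul_mem' := by
    intro a b ha hb
    refine ⟨?_, ?_⟩
    · simp only [SemidirectProduct.mul_left]
      exact S.mul_mem ha.1 (S_invariant_L ha.2 hb.1)
    · simp only [SemidirectProduct.mul_right, Subgroup.coe_mul]
      exact L.mul_mem ha.2 hb.2
  inv_mem' := by
    intro a ha
    refine ⟨?_, ?_⟩
    · simp only [SemidirectProduct.inv_left]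
      exact S_invariant_L (L.inv_mem ha.2) (S.inv_mem ha.1)
    · simp only [SemidirectProduct.inv_right, InvMemClass.coe_inv]
      exact L.inv_mem ha.2

lemma mem_SL_iff (g : G) :
    g ∈ SL ↔ (g.left ∈ S ∧ (g.right : Perm (Fin 4)) ∈ L) := Iff.rfl


def presPart (τ : Perm (Fin 4)) : Prop :=
  ∀ i j : Fin 4, ((i = 0 ∨ i = 3) ↔ (j = 0 ∨ j = 3)) →
    ((τ i = 0 ∨ τ i = 3) ↔ (τ j = 0 ∨ τ j = 3))

instance : DecidablePred presPart := fun τ => by unfold presPart; infer_instance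

def T' : Subgroup (Perm (Fin 4)) where
  carrier := {τ | presPart τ}
  one_mem' := by decide
  mul_mem' := by intro a b; revert a b; decide
  inv_mem' := by intro a; revert a; decide

lemma T_le_T' : T ≤ T' := by
  rw [T, Subgroup.closure_le]
  intro x hx
  simp only [Set.mem_insert_iff, Set.mem_singleton_iff] at hx
  rcases hx with rfl | rfl <;> · show presPart _; decide

lemma key (τ : Perm (Fin 4)) (hτ : presPart τ) (q : V) :
    q * act τ q ∈ S ↔ (τ ∈ L ∨ q ∈ Q) := by
  simp only [mem_S_iff, mem_L_iff, mem_Q_iff, Pi.mul_apply, act_apply]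
  revert hτ
  revert q
  revert τ
  decide

/-- For all `q ∈ (ℤ/2ℤ)⁴` and `τ ∈ T`, one has
`q + τ·q ∈ S` iff `τ ∈ L` or `q ∈ Q` (written multiplicatively). -/
theorem statement4 (q : V) (τ : Perm (Fin 4)) (hτ : τ ∈ T) :
    q * act τ q ∈ S ↔ (τ ∈ L ∨ q ∈ Q) :=
  key τ (T_le_T' hτ) q

end CantorPaper
end

section
/- The quotient group R := (Q⋊T)/(S⋊L) is isomorphic to the Klein four-group ℤ/2ℤ × ℤ/2ℤ. -/
open Equiv

namespace CantorPaper

/-!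
The map `(q, τ) ↦ (q 0 * q 3, whether τ swaps the blocks {0,3} and {1,2})` is a homomorphism on
`Q ⋊ T`, because on `Q` the products of the coordinates over the two blocks coincide. It is onto
`ℤ/2 × ℤ/2` with kernel `S ⋊ L`, and the first isomorphism theorem gives the claim.
-/

def blockIndex : Fin 4 → ZMod 2 := ![0, 1, 1, 0]

/-- A permutation preserves the partition `{{0,3},{1,2}}` exactly when it acts on block indices
as a translation. -/
def blockPreserving : Subgroup (Perm (Fin 4)) where
  carrier := {τ | ∀ i, blockIndex (τ i) = blockIndex i + blockIndex (τ 0)}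
  one_mem' := by decide
  mul_mem' {a b} := by
    simp only [Set.mem_ofPred_eq]
    revert a b
    decide
  inv_mem' {a} := by
    simp only [Set.mem_ofPred_eq]
    revert a
    decide

lemma mem_blockPreserving_iff (τ : Perm (Fin 4)) :
    τ ∈ blockPreserving ↔ ∀ i, blockIndex (τ i) = blockIndex i + blockIndex (τ 0) :=
  Iff.rfl

lemma T_le_blockPreserving : T ≤ blockPreserving := by
  rw [T, Subgroup.closure_le, Set.insert_subset_iff, Set.singleton_subset_iff, SetLike.mem_coe,
    SetLike.mem_coe, mem_blockPreserving_iff, mem_blockPreserving_iff]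
  decide

lemma swap_blocks_mem_T : swap 0 1 * swap 2 3 ∈ T :=
  Subgroup.subset_closure (Set.mem_insert_of_mem _ rfl)

def blockSign : blockPreserving →* Multiplicative (ZMod 2) where
  toFun τ := .ofAdd (blockIndex ((τ : Perm (Fin 4)) 0))
  map_one' := rfl
  map_mul' σ τ := by
    rw [← ofAdd_add, add_comm]
    exact congrArg _ (σ.2 _)

lemma blockSign_eq_one_iff (τ : blockPreserving) : blockSign τ = 1 ↔ (τ : Perm (Fin 4)) ∈ L := by
  obtain ⟨τ, hτ⟩ := τ
  change blockIndex (τ 0) = 0 ↔ τ ∈ L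
  rw [mem_blockPreserving_iff] at hτ
  rw [mem_L_iff]
  revert τ
  decide

def firstBlockProd : V →* Multiplicative (ZMod 2) :=
  Pi.evalMonoidHom (fun _ ↦ Multiplicative (ZMod 2)) 0 * Pi.evalMonoidHom _ 3

/-- On `Q` the products over the two blocks agree, and a block-preserving `τ` either fixes or
swaps the blocks. -/
lemma firstBlockProd_act {τ : Perm (Fin 4)} (hτ : τ ∈ blockPreserving) {q : V} (hq : q ∈ Q) :
    firstBlockProd (act τ q) = firstBlockProd q := by
  rw [mem_blockPreserving_iff] at hτ
  rw [mem_Q_iff] at hq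
  change q (τ⁻¹ 0) * q (τ⁻¹ 3) = q 0 * q 3
  revert τ q
  decide

lemma firstBlockProd_eq_one_iff {q : V} (hq : q ∈ Q) : firstBlockProd q = 1 ↔ q ∈ S := by
  rw [mem_Q_iff] at hq
  change q 0 * q 3 = 1 ↔ q 0 = q 3 ∧ q 1 = q 2
  revert q
  decide

def QT.toFirstBlockProd : QT →* Multiplicative (ZMod 2) where
  toFun g := firstBlockProd (g : G).left
  map_one' := map_one firstBlockProd
  map_mul' a b := by
    change firstBlockProd ((a : G).left * act (a : G).right (b : G).left) = _
    rw [map_mul, firstBlockProd_act (T_le_blockPreserving (a : G).right.2) b.2]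

def QT.toBlockSign : QT →* Multiplicative (ZMod 2) :=
  blockSign.comp ((Subgroup.inclusion T_le_blockPreserving).comp
    (SemidirectProduct.rightHom.comp QT.subtype))

def QT.toKlein : QT →* Multiplicative (ZMod 2) × Multiplicative (ZMod 2) :=
  QT.toFirstBlockProd.prod QT.toBlockSign

lemma QT.ker_toKlein : QT.toKlein.ker = SL.subgroupOf QT := by
  ext g
  rw [QT.toKlein, MonoidHom.ker_prod, Subgroup.mem_inf, MonoidHom.mem_ker, MonoidHom.mem_ker,
    Subgroup.mem_subgroupOf, mem_SL_iff]
  exact and_congr (firstBlockProd_eq_one_iff g.2) (blockSign_eq_one_iff _)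

lemma QT.toKlein_surjective : Function.Surjective QT.toKlein := by
  rintro ⟨x, y⟩
  obtain ⟨τ, hτ⟩ : ∃ τ : T, blockSign (Subgroup.inclusion T_le_blockPreserving τ) = y := by
    obtain ⟨b, rfl⟩ : ∃ b : ZMod 2, Multiplicative.ofAdd b = y := ⟨y.toAdd, rfl⟩
    fin_cases b
    · exact ⟨1, rfl⟩
    · exact ⟨⟨_, swap_blocks_mem_T⟩, rfl⟩
  have hw : ![x, x, 1, 1] ∈ Q := by
    rw [mem_Q_iff]
    revert x
    decide
  exact ⟨⟨⟨![x, x, 1, 1], τ⟩, hw⟩, Prod.ext (mul_one x) hτ⟩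

/-- The quotient group `R = (Q⋊T)/(S⋊L)` is isomorphic to
the Klein four-group `ℤ/2ℤ × ℤ/2ℤ`.  (`S⋊L` is a normal subgroup of `Q⋊T`,
which is supplied as an instance so that the quotient is a group.) -/
theorem statement6 [h : (SL.subgroupOf QT).Normal] :
    Nonempty ((QT ⧸ SL.subgroupOf QT) ≃* Multiplicative (ZMod 2 × ZMod 2)) :=
  ⟨(QuotientGroup.quotientMulEquivOfEq QT.ker_toKlein.symm).trans
    ((QuotientGroup.quotientKerEquivOfSurjective _ QT.toKlein_surjective).trans
      (MulEquiv.prodMultiplicative ..).symm)⟩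

end CantorPaper
end

section
/- Let π : (ℤ/2ℤ)⁴⋊T → ((ℤ/2ℤ)⁴⋊T)/(S⋊L) be the quotient homomorphism. For every x ∈ (S⋊T) ∖ (S⋊L) and every y ∈ (Q⋊L) ∖ (S⋊L), the elements π(x) and π(x)·π(y) are conjugate in the quotient group ((ℤ/2ℤ)⁴⋊T)/(S⋊L). (In the paper's notation: the elements ζ₁ and ζ₃ = ζ₁ζ₂ of R = (Q⋊T)/(S⋊L) are conjugate in ((ℤ/2ℤ)⁴⋊T)/(S⋊L); equivalently, S⋊T is not a normal subgroup of (ℤ/2ℤ)⁴⋊T.) -/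
open Equiv

namespace CantorPaper

lemma blk_of_mem_T {τ : Perm (Fin 4)} (hτ : τ ∈ T) :
    τ 0 + τ 3 = 3 ∧ τ 1 + τ 2 = 3 := by
  induction hτ using Subgroup.closure_induction with
  | mem x hx =>
      simp only [Set.mem_insert_iff, Set.mem_singleton_iff] at hx
      rcases hx with rfl | rfl <;> decide
  | one => decide
  | mul x y hx hy ihx ihy =>
      clear hx hy
      revert ihx ihy
      revert x y
      decide
  | inv x hx ih =>
      clear hx
      revert ih
      revert x
      decide

/-- The auxiliary vector `(1,0,0,0)`. -/
def rr : V := fun i => if i = 0 then Multiplicative.ofAdd 1 else 1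

lemma key_s7 {τ : Perm (Fin 4)} (hb : τ 0 + τ 3 = 3 ∧ τ 1 + τ 2 = 3) (hL : τ ∉ L)
    {q : V} (hq : q ∈ Q) (hqS : q ∉ S) (s : V) :
    (rr * s * act τ rr⁻¹)⁻¹ * (s * act τ q) ∈ S := by
  simp only [mem_L_iff] at hL
  simp only [mem_Q_iff] at hq
  simp only [mem_S_iff, act_apply, Pi.mul_apply, Pi.inv_apply] at hqS ⊢
  revert hb hL hq hqS
  revert s q τ
  decide

/-- Let `π : (ℤ/2ℤ)⁴⋊T → ((ℤ/2ℤ)⁴⋊T)/(S⋊L)` be the quotient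
homomorphism.  For every `x ∈ (S⋊T) ∖ (S⋊L)` and every `y ∈ (Q⋊L) ∖ (S⋊L)`,
the elements `π x` and `π x · π y` are conjugate in the quotient group.
(`S⋊L` is a normal subgroup of the full semidirect product, supplied as an
instance so that the quotient is a group.) -/
theorem statement7 [h : SL.Normal] :
    ∀ x ∈ ((ST : Set G) \ (SL : Set G)), ∀ y ∈ ((QL : Set G) \ (SL : Set G)),
      IsConj ((QuotientGroup.mk' SL) x)
        ((QuotientGroup.mk' SL) x * (QuotientGroup.mk' SL) y) := by
  rintro x ⟨hxS, hxn⟩ y ⟨⟨hyQ, hyL⟩, hyn⟩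
  rw [SetLike.mem_coe, mem_ST_iff] at hxS
  have hτL : (↑x.right : Perm (Fin 4)) ∉ L := fun hh => hxn ⟨hxS, hh⟩
  have hqS : y.left ∉ S := fun hh => hyn ⟨hh, hyL⟩
  have hb := blk_of_mem_T x.right.2
  rw [isConj_iff]
  refine ⟨(QuotientGroup.mk' SL) (SemidirectProduct.inl rr), ?_⟩
  rw [← map_mul, ← map_mul, ← map_inv, ← map_mul]
  rw [QuotientGroup.mk'_apply, QuotientGroup.mk'_apply, QuotientGroup.eq]
  rw [mem_SL_iff]
  constructor
  · simp only [SemidirectProduct.mul_left, SemidirectProduct.mul_right,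
      SemidirectProduct.inv_left, SemidirectProduct.inv_right,
      SemidirectProduct.left_inl, SemidirectProduct.right_inl,
      one_mul, mul_one, inv_one, map_one, MulAut.one_apply]
    rw [← map_mul]
    exact (S_invariant_T (x.right⁻¹).2 _).mpr (key_s7 hb hτL hyQ hqS x.left)
  · simp only [SemidirectProduct.mul_right, SemidirectProduct.inv_right,
      SemidirectProduct.right_inl, one_mul, mul_one, inv_one, inv_mul_cancel_left,
      Subgroup.coe_mul, InvMemClass.coe_inv]
    exact hyL

end CantorPaper
end

section
/- The quotient group ((ℤ/2ℤ)⁴⋊T)/(S⋊L) is isomorphic to the dihedral group D₄ of order 8. -/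
open Equiv

namespace CantorPaper

/-- Predicate: τ preserves the partition {{0,3},{1,2}}. -/
def presP (τ : Perm (Fin 4)) : Prop := τ 3 = 3 - τ 0

instance : DecidablePred presP := fun τ => inferInstanceAs (Decidable (_ = _))

lemma presP_mul : ∀ x y : Perm (Fin 4), presP x → presP y → presP (x * y) := by decide
lemma presP_inv : ∀ x : Perm (Fin 4), presP x → presP x⁻¹ := by decide

lemma mem_T_presP {τ : Perm (Fin 4)} (h : τ ∈ T) : presP τ := by
  induction h using Subgroup.closure_induction with
  | mem x hx =>
      simp only [Set.mem_insert_iff, Set.mem_singleton_iff] at hx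
      rcases hx with rfl | rfl <;> decide
  | one => decide
  | mul x y _ _ ihx ihy => exact presP_mul x y ihx ihy
  | inv x _ ih => exact presP_inv x ih

/-- The underlying function of the hom `V → D₄`. -/
def f1fun (q : V) : DihedralGroup 4 :=
  (if q 0 * q 3 = 1 then 1 else DihedralGroup.sr 0) *
    (if q 1 * q 2 = 1 then 1 else DihedralGroup.sr 2)

/-- The underlying function of the hom `T → D₄`. -/
def f2fun (τ : Perm (Fin 4)) : DihedralGroup 4 :=
  if τ 0 = 0 ∨ τ 0 = 3 then 1 else DihedralGroup.sr 1

lemma f1fun_mul : ∀ q r : V, f1fun (q * r) = f1fun q * f1fun r := by decide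

/-- `V →* D₄`. -/
def f1 : V →* DihedralGroup 4 where
  toFun := f1fun
  map_one' := by decide
  map_mul' := f1fun_mul

lemma f2fun_mul : ∀ x y : Perm (Fin 4), presP x → presP y →
    f2fun (x * y) = f2fun x * f2fun y := by decide

/-- `T →* D₄`. -/
def f2 : T →* DihedralGroup 4 where
  toFun τ := f2fun τ.1
  map_one' := by decide
  map_mul' x y := f2fun_mul x.1 y.1 (mem_T_presP x.2) (mem_T_presP y.2)

lemma compat_aux : ∀ τ : Perm (Fin 4), presP τ → ∀ q : V,
    f1fun (fun i => q (τ⁻¹ i)) = f2fun τ * f1fun q * (f2fun τ)⁻¹ := by decide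

lemma compat : ∀ g : T, f1.comp (φ g).toMonoidHom =
    (MulAut.conj (f2 g)).toMonoidHom.comp f1 := by
  intro g
  ext q
  exact compat_aux g.1 (mem_T_presP g.2) q

/-- The full hom `G →* D₄`. -/
def f : G →* DihedralGroup 4 := SemidirectProduct.lift f1 f2 compat

lemma f_apply (g : G) : f g = f1fun g.left * f2fun (g.right : Perm (Fin 4)) := rfl

lemma ker_aux : ∀ q : V, ∀ τ : Perm (Fin 4), presP τ →
    (f1fun q * f2fun τ = 1 ↔ ((q 0 = q 3 ∧ q 1 = q 2) ∧
      (τ = 1 ∨ τ = swap 0 3 ∨ τ = swap 1 2 ∨ τ = swap 0 3 * swap 1 2))) := by decide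

lemma SL_eq_ker : SL = f.ker := by
  ext g
  rw [MonoidHom.mem_ker, f_apply, mem_SL_iff,
    ker_aux g.left (g.right : Perm (Fin 4)) (mem_T_presP g.right.2)]
  rfl

lemma g2_mem_T : (swap 0 1 * swap 2 3 : Perm (Fin 4)) ∈ T :=
  Subgroup.subset_closure (by simp)

lemma f_surj : Function.Surjective f := by
  intro d
  rcases d with i | i <;> fin_cases i
  · exact ⟨⟨1, 1⟩, by decide⟩
  · exact ⟨⟨![Multiplicative.ofAdd 1, 1, 1, 1], ⟨_, g2_mem_T⟩⟩, by
      rw [f_apply]; decide⟩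
  · exact ⟨⟨![Multiplicative.ofAdd 1, Multiplicative.ofAdd 1, 1, 1], 1⟩, by
      rw [f_apply]; decide⟩
  · exact ⟨⟨![1, Multiplicative.ofAdd 1, 1, 1], ⟨_, g2_mem_T⟩⟩, by
      rw [f_apply]; decide⟩
  · exact ⟨⟨![Multiplicative.ofAdd 1, 1, 1, 1], 1⟩, by
      rw [f_apply]; decide⟩
  · exact ⟨⟨1, ⟨_, g2_mem_T⟩⟩, by rw [f_apply]; decide⟩
  · exact ⟨⟨![1, Multiplicative.ofAdd 1, 1, 1], 1⟩, by
      rw [f_apply]; decide⟩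
  · exact ⟨⟨![Multiplicative.ofAdd 1, Multiplicative.ofAdd 1, 1, 1], ⟨_, g2_mem_T⟩⟩, by
      rw [f_apply]; decide⟩

/-- The quotient group `((ℤ/2ℤ)⁴⋊T)/(S⋊L)` is isomorphic to
the dihedral group `D₄` of order 8.  (`S⋊L` is normal in the full semidirect
product, supplied as an instance so that the quotient is a group.) -/
theorem statement8 [h : SL.Normal] :
    Nonempty ((G ⧸ SL) ≃* DihedralGroup 4) := by
  exact ⟨(QuotientGroup.quotientMulEquivOfEq SL_eq_ker).trans
    (QuotientGroup.quotientKerEquivOfSurjective f f_surj)⟩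

end CantorPaper
end

section
/- Let a ∈ ℂ with |a| > 2 and let z ∈ ℂ with |z| > 5/3. Then z² ≠ 1 and |a(z²−1) + 1/(4a(z²−1))| > |a|·|z|. -/
/-!
Put `w = z² − 1` and `c = a w`, so that the map is `c + 1/(4c)`. The reverse triangle inequality
gives `|w| ≥ |z|² − 1 > 16/9` and `|c + 1/(4c)| ≥ |c| − 1/(4|c|)`. Since `|z|² − 1 − |z| > 1/9`
for `|z| > 5/3`, the main term exceeds `|a||z|` by more than `2/9`, while `|c| > 32/9` makes the
correction `1/(4|c|)` smaller than `9/128`.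
-/

theorem sq_norm_sub_one_le_norm_sq_sub_one {𝕜 : Type*} [NormedDivisionRing 𝕜] (z : 𝕜) :
    ‖z‖ ^ 2 - 1 ≤ ‖z ^ 2 - 1‖ := by
  have h := norm_sub_norm_le (z ^ 2) 1
  rwa [norm_pow, norm_one] at h

theorem norm_sub_inv_le_norm_add_inv {𝕜 : Type*} [RCLike 𝕜] (c : 𝕜) :
    ‖c‖ - 1 / (4 * ‖c‖) ≤ ‖c + 1 / (4 * c)‖ := by
  have h := norm_sub_norm_le c (-(1 / (4 * c)))
  rwa [norm_neg, norm_div, norm_one, norm_mul, RCLike.norm_ofNat, sub_neg_eq_add] at h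

theorem mul_lt_sub_inv_of_two_lt_of_five_thirds_lt {A t s : ℝ} (hA : 2 < A) (ht : 5 / 3 < t)
    (hs : t ^ 2 - 1 ≤ s) : A * t < A * s - 1 / (4 * (A * s)) := by
  have hs' : 16 / 9 < s := by nlinarith
  have hgap : 1 / 9 < s - t := by nlinarith
  have hinv : 1 / (4 * (A * s)) < 9 / 128 := by
    rw [div_lt_div_iff₀ (by positivity) (by norm_num)]
    nlinarith
  nlinarith [mul_lt_mul_of_pos_right hA (by norm_num : (0:ℝ) < 1 / 9),
    mul_lt_mul_of_pos_left hgap (by linarith : (0:ℝ) < A)]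

/-- For `|a| > 2` and `|z| > 5/3` one has `z² ≠ 1` and
`|f(z)| > |a|·|z|`, where `f(z) = a(z²−1) + 1/(4a(z²−1))`. -/
theorem example_map_expanding (a z : ℂ) (ha : 2 < ‖a‖)
    (hz : 5 / 3 < ‖z‖) :
    z ^ 2 ≠ 1 ∧
      ‖a‖ * ‖z‖ <
        ‖a * (z ^ 2 - 1) + 1 / (4 * a * (z ^ 2 - 1))‖ := by
  have hw := sq_norm_sub_one_le_norm_sq_sub_one z
  refine ⟨fun h => ?_, ?_⟩
  · rw [h, sub_self, norm_zero] at hw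
    nlinarith
  · calc ‖a‖ * ‖z‖ < ‖a‖ * ‖z ^ 2 - 1‖ - 1 / (4 * (‖a‖ * ‖z ^ 2 - 1‖)) :=
          mul_lt_sub_inv_of_two_lt_of_five_thirds_lt ha hz hw
      _ = ‖a * (z ^ 2 - 1)‖ - 1 / (4 * ‖a * (z ^ 2 - 1)‖) := by rw [norm_mul]
      _ ≤ ‖a * (z ^ 2 - 1) + 1 / (4 * a * (z ^ 2 - 1))‖ := by
          rw [mul_assoc 4]
          exact norm_sub_inv_le_norm_add_inv _
end

section
/- Let a ∈ ℂ with |a| > 2 and let z₀ ∈ ℂ with |z₀| > 5/3. Then the forward orbit z_{n+1} = f(z_n) is well-defined for all n ∈ ℕ (i.e., z_n² ≠ 1 for every n), and |z_n| > |a|ⁿ·|z₀| for every n ≥ 1; in particular |z_n| → ∞ as n → ∞. -/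
/-!
Writing `f(w) = a(w² - 1) + 1/(4a(w² - 1))`, the reverse triangle inequality gives
`|f(w)| ≥ |a||w² - 1| - 1/(4|a||w² - 1|)` and `|w² - 1| ≥ |w|² - 1`. For `|a| > 2` and
`|w| > 5/3` the first term exceeds `|a||w|` by `|a|(|w|² - |w| - 1) > 2/9`, while the second is
below `2/9` because `|w² - 1| > 16/9`; hence `|f(w)| > |a||w|`. So `{|w| > 5/3}` is forward invariant and each step
multiplies the modulus by more than `|a| > 1`.
-/

open Filter

noncomputable def exampleMap (a w : ℂ) : ℂ :=
  a * (w ^ 2 - 1) + 1 / (4 * a * (w ^ 2 - 1))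

section NormedDivisionRing

variable {𝕜 : Type*} [NormedDivisionRing 𝕜]

theorem norm_sq_sub_one_le_norm_sq_sub_one (w : 𝕜) : ‖w‖ ^ 2 - 1 ≤ ‖w ^ 2 - 1‖ := by
  have := norm_sub_norm_le (w ^ 2) 1
  rwa [norm_pow, norm_one] at this

theorem sq_ne_one_of_one_lt_norm {w : 𝕜} (hw : 1 < ‖w‖) : w ^ 2 ≠ 1 := by
  intro h
  have := norm_sq_sub_one_le_norm_sq_sub_one w
  rw [h, sub_self, norm_zero] at this
  nlinarith

end NormedDivisionRing

theorem norm_mul_lt_norm_exampleMap {a w : ℂ} (ha : 2 < ‖a‖) (hw : 5 / 3 < ‖w‖) :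
    ‖a‖ * ‖w‖ < ‖exampleMap a w‖ := by
  set A := ‖a‖
  set t := ‖w‖
  set D := ‖w ^ 2 - 1‖
  have hD : t ^ 2 - 1 ≤ D := norm_sq_sub_one_le_norm_sq_sub_one w
  have hD_pos : 16 / 9 < D := by nlinarith
  have h_inv : ‖1 / (4 * a * (w ^ 2 - 1))‖ = 1 / (4 * A * D) := by
    rw [norm_div, norm_mul, norm_mul, norm_one, Complex.norm_ofNat]
  have h_inv_small : 1 / (4 * A * D) < 2 / 9 := by
    rw [div_lt_iff₀ (by positivity)]
    nlinarith
  -- `5/3` is a rational point beyond the golden ratio, where `t² - t - 1` turns positive.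
  have h_gap : 2 / 9 < A * (t ^ 2 - t - 1) := by
    have : 1 / 9 < t ^ 2 - t - 1 := by nlinarith
    nlinarith
  calc A * t < A * D - 1 / (4 * A * D) := by nlinarith
    _ = ‖a * (w ^ 2 - 1)‖ - ‖1 / (4 * a * (w ^ 2 - 1))‖ := by rw [norm_mul, h_inv]
    _ ≤ ‖exampleMap a w‖ := norm_sub_le_norm_add _ _

section Orbit

variable {E : Type*} [SeminormedAddGroup E] {g : E → E} {A R : ℝ} {z : ℕ → E}

theorem lt_norm_orbit_of_expanding (hA : 1 ≤ A) (hg : ∀ w, R < ‖w‖ → A * ‖w‖ < ‖g w‖)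
    (hz : R < ‖z 0‖) (hrec : ∀ n, z (n + 1) = g (z n)) (n : ℕ) : R < ‖z n‖ := by
  induction n with
  | zero => exact hz
  | succ n ih =>
    rw [hrec n]
    nlinarith [hg (z n) ih, norm_nonneg (z n)]

theorem pow_mul_norm_lt_norm_orbit_of_expanding (hA : 1 ≤ A)
    (hg : ∀ w, R < ‖w‖ → A * ‖w‖ < ‖g w‖) (hz : R < ‖z 0‖) (hrec : ∀ n, z (n + 1) = g (z n))
    {n : ℕ} (hn : 1 ≤ n) : A ^ n * ‖z 0‖ < ‖z n‖ := by
  have hR n := lt_norm_orbit_of_expanding hA hg hz hrec n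
  induction n, hn using Nat.le_induction with
  | base => simpa only [pow_one, hrec 0] using hg (z 0) hz
  | succ n _ ih =>
    rw [hrec n]
    calc A ^ (n + 1) * ‖z 0‖ = A * (A ^ n * ‖z 0‖) := by ring
      _ < A * ‖z n‖ := by gcongr
      _ < ‖g (z n)‖ := hg (z n) (hR n)

theorem tendsto_norm_orbit_of_expanding (hA : 1 < A) (hg : ∀ w, R < ‖w‖ → A * ‖w‖ < ‖g w‖)
    (hR : 0 ≤ R) (hz : R < ‖z 0‖) (hrec : ∀ n, z (n + 1) = g (z n)) :
    Tendsto (fun n => ‖z n‖) atTop atTop := by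
  refine tendsto_atTop_mono' _ ((eventually_ge_atTop 1).mono fun n hn => ?_)
    ((tendsto_pow_atTop_atTop_of_one_lt hA).atTop_mul_const (hR.trans_lt hz))
  exact (pow_mul_norm_lt_norm_orbit_of_expanding hA.le hg hz hrec hn).le

end Orbit

/-- For `|a| > 2` and `|z₀| > 5/3`, the forward orbit
`z_{n+1} = f(z_n)` of `z₀` under `f(z) = a(z²−1) + 1/(4a(z²−1))` is
well-defined (`z_n² ≠ 1` for all `n`), satisfies `|z_n| > |a|ⁿ·|z₀|` for all
`n ≥ 1`, and `|z_n| → ∞`. -/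
theorem example_map_orbit_escapes (a z₀ : ℂ) (ha : 2 < ‖a‖)
    (hz₀ : 5 / 3 < ‖z₀‖) (z : ℕ → ℂ) (h0 : z 0 = z₀)
    (hrec : ∀ n : ℕ, z (n + 1) = a * ((z n) ^ 2 - 1) + 1 / (4 * a * ((z n) ^ 2 - 1))) :
    (∀ n : ℕ, (z n) ^ 2 ≠ 1) ∧
    (∀ n : ℕ, 1 ≤ n → ‖a‖ ^ n * ‖z₀‖ < ‖z n‖) ∧
    Filter.Tendsto (fun n => ‖z n‖) Filter.atTop Filter.atTop := by
  subst h0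
  have hA : 1 < ‖a‖ := by linarith
  have hg : ∀ w, 5 / 3 < ‖w‖ → ‖a‖ * ‖w‖ < ‖exampleMap a w‖ :=
    fun _ hw => norm_mul_lt_norm_exampleMap ha hw
  have hrec' : ∀ n, z (n + 1) = exampleMap a (z n) := hrec
  refine ⟨fun n => sq_ne_one_of_one_lt_norm ?_, fun n hn => ?_, ?_⟩
  · linarith [lt_norm_orbit_of_expanding hA.le hg hz₀ hrec' n]
  · exact pow_mul_norm_lt_norm_orbit_of_expanding hA.le hg hz₀ hrec' hn
  · exact tendsto_norm_orbit_of_expanding hA hg (by norm_num) hz₀ hrec'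
end

section
/- Let c ≥ 1 and a = ic. For every real y ≤ 0, one has (iy)² ≠ 1, the value f(iy) is purely imaginary, and Im f(iy) < y. Consequently the forward orbit of 0 under f stays on the negative imaginary axis and its imaginary parts are strictly decreasing: 0 > Im f(0) > Im f²(0) > ⋯. -/
/-- For `a = ic` with `c ≥ 1` and
`f(z) = a(z²−1) + 1/(4a(z²−1))`: for every real `y ≤ 0`, `(iy)² ≠ 1`,
`f(iy)` is purely imaginary and `Im f(iy) < y`.  Consequently the forward
orbit of `0` stays on the negative imaginary axis with strictly decreasing
imaginary parts: `0 > Im f(0) > Im f²(0) > ⋯`. -/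
theorem example_map_orbit_of_zero (c : ℝ) (hc : 1 ≤ c) :
    let f : ℂ → ℂ := fun z =>
      (Complex.I * c) * (z ^ 2 - 1) + 1 / (4 * (Complex.I * c) * (z ^ 2 - 1))
    (∀ y : ℝ, y ≤ 0 →
      ((Complex.I * y) ^ 2 ≠ 1 ∧ (f (Complex.I * y)).re = 0 ∧
        (f (Complex.I * y)).im < y)) ∧
    (∀ k : ℕ, 1 ≤ k →
      (f^[k] 0).re = 0 ∧ (f^[k] 0).im < 0 ∧ (f^[k + 1] 0).im < (f^[k] 0).im) := by
  intro f
  have hc0 : (0:ℝ) < c := lt_of_lt_of_le one_pos hc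
  -- value of f on the imaginary axis
  have hval : ∀ y : ℝ, f (Complex.I * y)
      = Complex.I * ((1/(4*c*(y^2+1)) - c*(y^2+1) : ℝ) : ℂ) := by
    intro y
    have hu : (0:ℝ) < y^2+1 := by positivity
    have huc : ((y^2+1 : ℝ) : ℂ) ≠ 0 := by exact_mod_cast hu.ne'
    have hcc : ((c : ℝ) : ℂ) ≠ 0 := by exact_mod_cast hc0.ne'
    have h2 : ((Complex.I * (y:ℂ))^2 - 1) = -(((y^2+1 : ℝ)) : ℂ) := by
      push_cast
      rw [mul_pow, Complex.I_sq]
      ring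
    simp only [f, h2]
    rw [show (4*(Complex.I*(c:ℂ))*(-(((y^2+1:ℝ)):ℂ)))
        = Complex.I * ((-(4*c*(y^2+1)) : ℝ) : ℂ) by push_cast; ring]
    rw [one_div, mul_inv, Complex.inv_I]
    push_cast
    field_simp
    ring
  have H : ∀ y : ℝ, y ≤ 0 → (f (Complex.I * y)).re = 0 ∧ (f (Complex.I * y)).im < y := by
    intro y hy
    rw [hval y]
    refine ⟨by rw [Complex.I_mul_re, Complex.ofReal_im, neg_zero], ?_⟩
    simp only [Complex.I_mul_im, Complex.ofReal_re]
    have hu : (1:ℝ) ≤ y^2+1 := by nlinarith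
    have ht : (1:ℝ) ≤ c*(y^2+1) := by nlinarith
    have h4 : 1/(4*c*(y^2+1)) ≤ 1/4 := by
      rw [div_le_div_iff₀ (by nlinarith) (by norm_num)]
      nlinarith
    nlinarith [sq_nonneg (y + 1/2)]
  have hne : ∀ y : ℝ, (Complex.I * (y:ℂ))^2 ≠ 1 := by
    intro y h
    have h2 : ((Complex.I * (y:ℂ))^2) = ((-(y^2) : ℝ) : ℂ) := by
      push_cast
      rw [mul_pow, Complex.I_sq]
      ring
    rw [h2] at h
    have : (-(y^2) : ℝ) = 1 := by exact_mod_cast h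
    nlinarith
  constructor
  · intro y hy
    exact ⟨hne y, H y hy⟩
  · have key : ∀ k : ℕ, 1 ≤ k → (f^[k] 0).re = 0 ∧ (f^[k] 0).im < 0 := by
      intro k hk
      induction k with
      | zero => omega
      | succ n ih =>
        rcases Nat.eq_zero_or_pos n with h0 | hpos
        · subst h0
          have h := H 0 le_rfl
          rw [show Complex.I * ((0:ℝ):ℂ) = 0 by simp] at h
          simpa using h
        · obtain ⟨hre, him⟩ := ih hpos
          have hz : f^[n] 0 = Complex.I * (((f^[n] 0).im : ℝ) : ℂ) := by
            apply Complex.ext <;> simp [hre]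
          have h := H (f^[n] 0).im him.le
          rw [Function.iterate_succ_apply']
          refine ⟨?_, ?_⟩
          · nth_rewrite 1 [hz]; exact h.1
          · nth_rewrite 1 [hz]; exact lt_trans h.2 him
    intro k hk
    obtain ⟨hre, him⟩ := key k hk
    refine ⟨hre, him, ?_⟩
    have hz : f^[k] 0 = Complex.I * (((f^[k] 0).im : ℝ) : ℂ) := by
      apply Complex.ext <;> simp [hre]
    have h := H (f^[k] 0).im him.le
    rw [Function.iterate_succ_apply']
    nth_rewrite 1 [hz]
    exact h.2
end
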